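/- Let I be a traditional interpretation without unreachable objects and suppose the quotient QS-interpretation I' = I/∼^{QS} is finite with n elements. Then I' is a minimal QS-interpretation validating the same terminological axioms of L_Φ as I: every QS-interpretation that validates exactly the same axioms C ⊑ D of L_Φ as I has at least n elements in its domain. -/

import Mathlib

/-- A set of DL-features (subset of {I, O, Q, U, Self}). -/
structure DLFeat where
  hasI : Bool
  hasO : Bool
  hasQ : Bool
  hasU : Bool
  hasSelf : Bool

/-- An interpretation with concept names `CN`, role names `RN`, individual names `IN`
and domain `D`. -/
structure Interp (CN RN IN : Type) (D : Type) where
  cInt : CN → Set D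
  rInt : RN → D → D → Prop
  iInt : IN → D

/-- Interpretation of a basic role: a role name, possibly inverted. -/
def brInt {CN RN IN D : Type} (I : Interp CN RN IN D) (R : RN × Bool) (x y : D) : Prop :=
  if R.2 then I.rInt R.1 y x else I.rInt R.1 x y

mutual
/-- Concepts of the full language (membership in `L_Φ` is a separate predicate). -/
inductive DLConcept (CN RN IN : Type) : Type where
  | atom (A : CN)
  | top
  | bot
  | neg (C : DLConcept CN RN IN)
  | conj (C D : DLConcept CN RN IN)
  | disj (C D : DLConcept CN RN IN)
  | all (R : DLRole CN RN IN) (C : DLConcept CN RN IN)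
  | ex (R : DLRole CN RN IN) (C : DLConcept CN RN IN)
  | nom (a : IN)
  | atLeast (n : ℕ) (r : RN) (inverted : Bool) (C : DLConcept CN RN IN)
  | atMost (n : ℕ) (r : RN) (inverted : Bool) (C : DLConcept CN RN IN)
  | exSelf (r : RN)
/-- Roles of the full language. -/
inductive DLRole (CN RN IN : Type) : Type where
  | name (r : RN)
  | eps
  | comp (R S : DLRole CN RN IN)
  | runion (R S : DLRole CN RN IN)
  | star (R : DLRole CN RN IN)
  | test (C : DLConcept CN RN IN)
  | inv (r : RN)
  | univ
end

mutual
/-- The concept belongs to the language `L_Φ`. -/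
def DLConcept.inL {CN RN IN : Type} (Φ : DLFeat) : DLConcept CN RN IN → Prop
  | .atom _ => True
  | .top => True
  | .bot => True
  | .neg C => C.inL Φ
  | .conj C D => C.inL Φ ∧ D.inL Φ
  | .disj C D => C.inL Φ ∧ D.inL Φ
  | .all R C => R.inL Φ ∧ C.inL Φ
  | .ex R C => R.inL Φ ∧ C.inL Φ
  | .nom _ => Φ.hasO = true
  | .atLeast _ _ b C => Φ.hasQ = true ∧ (b = true → Φ.hasI = true) ∧ C.inL Φ
  | .atMost _ _ b C => Φ.hasQ = true ∧ (b = true → Φ.hasI = true) ∧ C.inL Φ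
  | .exSelf _ => Φ.hasSelf = true
/-- The role belongs to the language `L_Φ`. -/
def DLRole.inL {CN RN IN : Type} (Φ : DLFeat) : DLRole CN RN IN → Prop
  | .name _ => True
  | .eps => True
  | .comp R S => R.inL Φ ∧ S.inL Φ
  | .runion R S => R.inL Φ ∧ S.inL Φ
  | .star R => R.inL Φ
  | .test C => C.inL Φ
  | .inv _ => Φ.hasI = true
  | .univ => Φ.hasU = true
end

mutual
/-- Semantics of concepts. -/
def DLConcept.sem {CN RN IN D : Type} (I : Interp CN RN IN D) : DLConcept CN RN IN → Set D
  | .atom A => I.cInt A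
  | .top => Set.univ
  | .bot => ∅
  | .neg C => (DLConcept.sem I C)ᶜ
  | .conj C C' => DLConcept.sem I C ∩ DLConcept.sem I C'
  | .disj C C' => DLConcept.sem I C ∪ DLConcept.sem I C'
  | .all R C => {x | ∀ y, DLRole.sem I R x y → y ∈ DLConcept.sem I C}
  | .ex R C => {x | ∃ y, DLRole.sem I R x y ∧ y ∈ DLConcept.sem I C}
  | .nom a => {I.iInt a}
  | .atLeast n r b C =>
      {x | (n : Cardinal) ≤ Cardinal.mk {y // brInt I (r, b) x y ∧ y ∈ DLConcept.sem I C}}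
  | .atMost n r b C =>
      {x | Cardinal.mk {y // brInt I (r, b) x y ∧ y ∈ DLConcept.sem I C} ≤ (n : Cardinal)}
  | .exSelf r => {x | I.rInt r x x}
/-- Semantics of roles. -/
def DLRole.sem {CN RN IN D : Type} (I : Interp CN RN IN D) : DLRole CN RN IN → D → D → Prop
  | .name r => I.rInt r
  | .eps => Eq
  | .comp R S => Relation.Comp (DLRole.sem I R) (DLRole.sem I S)
  | .runion R S => fun x y => DLRole.sem I R x y ∨ DLRole.sem I S x y
  | .star R => Relation.ReflTransGen (DLRole.sem I R)
  | .test C => fun x y => x = y ∧ x ∈ DLConcept.sem I C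
  | .inv r => fun x y => I.rInt r y x
  | .univ => fun _ _ => True
end

/-- `Z` is an `L_Φ`-bisimulation between `I` and `I'`. -/
def Bisim {CN RN IN D D' : Type} (Φ : DLFeat) (I : Interp CN RN IN D)
    (I' : Interp CN RN IN D') (Z : D → D' → Prop) : Prop :=
  (∀ a : IN, Z (I.iInt a) (I'.iInt a)) ∧
  (∀ (A : CN) x x', Z x x' → (x ∈ I.cInt A ↔ x' ∈ I'.cInt A)) ∧
  (∀ (r : RN) x x' y, Z x x' → I.rInt r x y → ∃ y', Z y y' ∧ I'.rInt r x' y') ∧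
  (∀ (r : RN) x x' y', Z x x' → I'.rInt r x' y' → ∃ y, Z y y' ∧ I.rInt r x y) ∧
  (Φ.hasI = true →
    (∀ (r : RN) x x' y, Z x x' → I.rInt r y x → ∃ y', Z y y' ∧ I'.rInt r y' x') ∧
    (∀ (r : RN) x x' y', Z x x' → I'.rInt r y' x' → ∃ y, Z y y' ∧ I.rInt r y x)) ∧
  (Φ.hasO = true → ∀ (a : IN) x x', Z x x' → (x = I.iInt a ↔ x' = I'.iInt a)) ∧
  (Φ.hasQ = true → ∀ (r : RN) x x', Z x x' →
    ∃ h : {y // I.rInt r x y} ≃ {y' // I'.rInt r x' y'}, ∀ y, Z y.1 (h y).1) ∧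
  (Φ.hasQ = true → Φ.hasI = true → ∀ (r : RN) x x', Z x x' →
    ∃ h : {y // I.rInt r y x} ≃ {y' // I'.rInt r y' x'}, ∀ y, Z y.1 (h y).1) ∧
  (Φ.hasU = true → (∀ x, ∃ x', Z x x') ∧ (∀ x', ∃ x, Z x x')) ∧
  (Φ.hasSelf = true → ∀ (r : RN) x x', Z x x' → (I.rInt r x x ↔ I'.rInt r x' x'))

/-- One step along a basic role (role name, or inverse of a role name if `I ∈ Φ`). -/
def basicStep {CN RN IN D : Type} (Φ : DLFeat) (I : Interp CN RN IN D) (x y : D) : Prop :=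
  ∃ r : RN, I.rInt r x y ∨ (Φ.hasI = true ∧ I.rInt r y x)

/-- `I` is unreachable-objects-free: every element is reachable from some named
individual via a finite path of basic-role edges. -/
def UOF {CN RN IN D : Type} (Φ : DLFeat) (I : Interp CN RN IN D) : Prop :=
  ∀ x : D, ∃ a : IN, Relation.ReflTransGen (basicStep Φ I) (I.iInt a) x

/-- `I` validates the GCI `C ⊑ C'`. -/
def satGCI {CN RN IN D : Type} (I : Interp CN RN IN D) (C C' : DLConcept CN RN IN) : Prop :=
  DLConcept.sem I C ⊆ DLConcept.sem I C'

/-- `I` is a model of the TBox `T`. -/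
def modelsTBox {CN RN IN D : Type} (I : Interp CN RN IN D)
    (T : Set (DLConcept CN RN IN × DLConcept CN RN IN)) : Prop :=
  ∀ p ∈ T, satGCI I p.1 p.2

/-- Individual assertions. -/
inductive Assertion (CN RN IN : Type) : Type where
  | conc (C : DLConcept CN RN IN) (a : IN)
  | rolePos (R : DLRole CN RN IN) (a b : IN)
  | roleNeg (R : DLRole CN RN IN) (a b : IN)
  | eq (a b : IN)
  | neq (a b : IN)

/-- The assertion belongs to `L_Φ`. -/
def Assertion.inL {CN RN IN : Type} (Φ : DLFeat) : Assertion CN RN IN → Prop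
  | .conc C _ => C.inL Φ
  | .rolePos R _ _ => R.inL Φ
  | .roleNeg R _ _ => R.inL Φ
  | .eq _ _ => True
  | .neq _ _ => True

/-- `I` satisfies the individual assertion. -/
def Assertion.sat {CN RN IN D : Type} (I : Interp CN RN IN D) : Assertion CN RN IN → Prop
  | .conc C a => I.iInt a ∈ DLConcept.sem I C
  | .rolePos R a b => DLRole.sem I R (I.iInt a) (I.iInt b)
  | .roleNeg R a b => ¬ DLRole.sem I R (I.iInt a) (I.iInt b)
  | .eq a b => I.iInt a = I.iInt b
  | .neq a b => I.iInt a ≠ I.iInt b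

/-- `I` is a model of the ABox `A`. -/
def modelsABox {CN RN IN D : Type} (I : Interp CN RN IN D) (A : Set (Assertion CN RN IN)) : Prop :=
  ∀ φ ∈ A, φ.sat I

/-- A role axiom `R₁ ∘ … ∘ R_k ⊑ r` (`ε ⊑ r` when the list is empty), the `R_i` basic roles. -/
structure RoleAx (RN : Type) where
  lhs : List (RN × Bool)
  rhs : RN

/-- The role axiom is in `L_Φ` (inverse basic roles only if `I ∈ Φ`). -/
def RoleAx.inL {RN : Type} (Φ : DLFeat) (ax : RoleAx RN) : Prop :=
  ∀ p ∈ ax.lhs, p.2 = true → Φ.hasI = true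

/-- Interpretation of a composition chain of basic roles (`ε` for the empty chain). -/
def chainInt {CN RN IN D : Type} (I : Interp CN RN IN D) : List (RN × Bool) → D → D → Prop
  | [] => Eq
  | R :: l => fun x z => ∃ y, brInt I R x y ∧ chainInt I l y z

/-- `I` validates the role axiom. -/
def satRoleAx {CN RN IN D : Type} (I : Interp CN RN IN D) (ax : RoleAx RN) : Prop :=
  ∀ x y, chainInt I ax.lhs x y → I.rInt ax.rhs x y

/-- `I` is a model of the RBox `R`. -/
def modelsRBox {CN RN IN D : Type} (I : Interp CN RN IN D) (R : Set (RoleAx RN)) : Prop :=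
  ∀ ax ∈ R, satRoleAx I ax

/-- `I'` is an r-extension of `I`. -/
def RExt {CN RN IN D : Type} (I I' : Interp CN RN IN D) : Prop :=
  I'.cInt = I.cInt ∧ I'.iInt = I.iInt ∧ ∀ (r : RN) x y, I.rInt r x y → I'.rInt r x y

/-- `I'` is the least r-extension of `I` validating the RBox `R`. -/
def LeastRExt {CN RN IN D : Type} (I : Interp CN RN IN D) (R : Set (RoleAx RN))
    (I' : Interp CN RN IN D) : Prop :=
  RExt I I' ∧ modelsRBox I' R ∧
    ∀ I'' : Interp CN RN IN D, RExt I I'' → modelsRBox I'' R →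
      ∀ (r : RN) x y, I'.rInt r x y → I''.rInt r x y

/-- `I` is finitely branching w.r.t. `L_Φ`. -/
def FinBranch {CN RN IN D : Type} (Φ : DLFeat) (I : Interp CN RN IN D) : Prop :=
  ∀ (r : RN) (x : D), {y | I.rInt r x y}.Finite ∧ (Φ.hasI = true → {y | I.rInt r y x}.Finite)

/-- `x` and `x'` are `L_Φ`-equivalent: they satisfy the same concepts of `L_Φ`. -/
def LEquiv {CN RN IN D D' : Type} (Φ : DLFeat) (I : Interp CN RN IN D)
    (I' : Interp CN RN IN D') (x : D) (x' : D') : Prop :=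
  ∀ C : DLConcept CN RN IN, C.inL Φ → (x ∈ DLConcept.sem I C ↔ x' ∈ DLConcept.sem I' C)

/-- The largest `L_Φ`-auto-bisimulation of `I` (union of all auto-bisimulations). -/
def gbisim {CN RN IN D : Type} (Φ : DLFeat) (I : Interp CN RN IN D) (x y : D) : Prop :=
  ∃ Z, Bisim Φ I I Z ∧ Z x y

/-- The quotient interpretation of `I` w.r.t. the largest `L_Φ`-auto-bisimulation. -/
def quotInterp {CN RN IN D : Type} (Φ : DLFeat) (I : Interp CN RN IN D) :
    Interp CN RN IN (Quot (gbisim Φ I)) where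
  cInt A := {q | ∃ x, Quot.mk _ x = q ∧ x ∈ I.cInt A}
  rInt r q q' := ∃ x y, Quot.mk _ x = q ∧ Quot.mk _ y = q' ∧ I.rInt r x y
  iInt a := Quot.mk _ (I.iInt a)

/-- A QS-interpretation: an interpretation together with multiplicity functions for
basic roles and self-loop sets for role names. -/
structure QSInterp (CN RN IN D : Type) where
  toInterp : Interp CN RN IN D
  QU : (RN × Bool) → D → D → ℕ
  SE : RN → Set D

/-- The defining positivity condition of QS-interpretations:
`QU R x y > 0` iff `R` connects `x` to `y`. -/
def QSInterp.Proper {CN RN IN D : Type} (J : QSInterp CN RN IN D) : Prop :=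
  ∀ (R : RN × Bool) x y, 0 < J.QU R x y ↔ brInt J.toInterp R x y

/-- `Σ {f y : y ∈ S}` as an extended natural number. -/
noncomputable def qsum {D : Type} (f : D → ℕ) (S : Set D) : ℕ∞ :=
  ⨆ (s : Finset D) (_ : ↑s ⊆ S), (∑ y ∈ s, f y : ℕ∞)

mutual
/-- Semantics of concepts in a QS-interpretation. -/
noncomputable def DLConcept.qsem {CN RN IN D : Type} (J : QSInterp CN RN IN D) :
    DLConcept CN RN IN → Set D
  | .atom A => J.toInterp.cInt A
  | .top => Set.univ
  | .bot => ∅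
  | .neg C => (DLConcept.qsem J C)ᶜ
  | .conj C C' => DLConcept.qsem J C ∩ DLConcept.qsem J C'
  | .disj C C' => DLConcept.qsem J C ∪ DLConcept.qsem J C'
  | .all R C => {x | ∀ y, DLRole.qsem J R x y → y ∈ DLConcept.qsem J C}
  | .ex R C => {x | ∃ y, DLRole.qsem J R x y ∧ y ∈ DLConcept.qsem J C}
  | .nom a => {J.toInterp.iInt a}
  | .atLeast n r b C => {x | (n : ℕ∞) ≤ qsum (J.QU (r, b) x) (DLConcept.qsem J C)}
  | .atMost n r b C => {x | qsum (J.QU (r, b) x) (DLConcept.qsem J C) ≤ (n : ℕ∞)}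
  | .exSelf r => J.SE r
/-- Semantics of roles in a QS-interpretation. -/
noncomputable def DLRole.qsem {CN RN IN D : Type} (J : QSInterp CN RN IN D) :
    DLRole CN RN IN → D → D → Prop
  | .name r => J.toInterp.rInt r
  | .eps => Eq
  | .comp R S => Relation.Comp (DLRole.qsem J R) (DLRole.qsem J S)
  | .runion R S => fun x y => DLRole.qsem J R x y ∨ DLRole.qsem J S x y
  | .star R => Relation.ReflTransGen (DLRole.qsem J R)
  | .test C => fun x y => x = y ∧ x ∈ DLConcept.qsem J C
  | .inv r => fun x y => J.toInterp.rInt r y x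
  | .univ => fun _ _ => True
end

/-- The quotient QS-interpretation of a traditional interpretation `I` w.r.t. the
largest `L_Φ`-auto-bisimulation. -/
noncomputable def qsQuot {CN RN IN D : Type} (Φ : DLFeat) (I : Interp CN RN IN D) :
    QSInterp CN RN IN (Quot (gbisim Φ I)) where
  toInterp := quotInterp Φ I
  QU R q q' := sSup {n | ∃ x, Quot.mk _ x = q ∧
    n = Set.ncard {y | Quot.mk (gbisim Φ I) y = q' ∧ brInt I R x y}}
  SE r := {q | ∃ x, Quot.mk _ x = q ∧ I.rInt r x x}


/-!
Classes of the largest auto-bisimulation are separated by `L_Φ`-concepts, so with finitely many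
classes each class `c` is defined by a concept `χ_c`. The axiom `⊤ ⊑ ⊔_c χ_c` is valid in `I`,
while `⊤ ⊑ ⊔_{c' ≠ c} χ_{c'}` is not; since `J` validates the same axioms, for every `c` some
element of `J` lies in `χ_c` and in no other `χ_{c'}`.

The delicate point is that `L_Φ`-equivalence is itself a bisimulation, i.e. that distinct classes
are never `L_Φ`-equivalent. The concepts `χ_c` give the forth and back conditions; for number
restrictions one also needs the successors of an element inside a class to be finitely many, and
an infinite such set would make `χ ⊑ (≥ k r.χ_c)` valid for every `k`, which a finite `J` cannot
satisfy (an infinite `J` makes the theorem trivial).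
-/

section Invariance

variable {CN RN IN D D' : Type} {Φ : DLFeat} {I : Interp CN RN IN D} {I' : Interp CN RN IN D'}
  {Z : D → D' → Prop}

theorem card_subtype_and_eq_of_equiv {α β : Type} {p s : α → Prop} {q t : β → Prop}
    (e : {a // p a} ≃ {b // q b}) (he : ∀ a, s a.1 ↔ t (e a).1) :
    Cardinal.mk {a // p a ∧ s a} = Cardinal.mk {b // q b ∧ t b} :=
  Cardinal.mk_congr <| (Equiv.subtypeSubtypeEquivSubtypeInter p s).symm.trans <|
    (e.subtypeEquiv he).trans (Equiv.subtypeSubtypeEquivSubtypeInter q t)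

theorem Bisim.exists_equiv_succ (hZ : Bisim Φ I I' Z) (hQ : Φ.hasQ = true) (r : RN) {b : Bool}
    (hb : b = true → Φ.hasI = true) {x : D} {x' : D'} (hxx : Z x x') :
    ∃ e : {y // brInt I (r, b) x y} ≃ {y' // brInt I' (r, b) x' y'}, ∀ y, Z y.1 (e y).1 := by
  obtain ⟨-, -, -, -, -, -, hsucc, hpred, -⟩ := hZ
  cases b
  · exact hsucc hQ r x x' hxx
  · exact hpred hQ (hb rfl) r x x' hxx

mutual

theorem Bisim.mem_sem_iff (hZ : Bisim Φ I I' Z) (C : DLConcept CN RN IN) (hC : C.inL Φ)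
    {x : D} {x' : D'} (hxx : Z x x') : x ∈ C.sem I ↔ x' ∈ C.sem I' := by
  cases C with
  | atom A => exact hZ.2.1 A x x' hxx
  | top => exact Iff.rfl
  | bot => exact Iff.rfl
  | neg C => exact not_congr (hZ.mem_sem_iff C hC hxx)
  | conj C C' => exact and_congr (hZ.mem_sem_iff C hC.1 hxx) (hZ.mem_sem_iff C' hC.2 hxx)
  | disj C C' => exact or_congr (hZ.mem_sem_iff C hC.1 hxx) (hZ.mem_sem_iff C' hC.2 hxx)
  | all R C =>
    constructor
    · intro hx y' hR
      obtain ⟨y, hyy, hRy⟩ := hZ.exists_back R hC.1 hxx hR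
      exact (hZ.mem_sem_iff C hC.2 hyy).mp (hx y hRy)
    · intro hx y hR
      obtain ⟨y', hyy, hRy⟩ := hZ.exists_forth R hC.1 hxx hR
      exact (hZ.mem_sem_iff C hC.2 hyy).mpr (hx y' hRy)
  | ex R C =>
    constructor
    · rintro ⟨y, hR, hy⟩
      obtain ⟨y', hyy, hRy⟩ := hZ.exists_forth R hC.1 hxx hR
      exact ⟨y', hRy, (hZ.mem_sem_iff C hC.2 hyy).mp hy⟩
    · rintro ⟨y', hR, hy⟩
      obtain ⟨y, hyy, hRy⟩ := hZ.exists_back R hC.1 hxx hR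
      exact ⟨y, hRy, (hZ.mem_sem_iff C hC.2 hyy).mpr hy⟩
  | nom a => exact hZ.2.2.2.2.2.1 hC a x x' hxx
  | atLeast k r b C =>
    obtain ⟨e, he⟩ := hZ.exists_equiv_succ hC.1 r hC.2.1 hxx
    simp only [DLConcept.sem, Set.mem_ofPred_eq]
    rw [card_subtype_and_eq_of_equiv e fun y => hZ.mem_sem_iff C hC.2.2 (he y)]
  | atMost k r b C =>
    obtain ⟨e, he⟩ := hZ.exists_equiv_succ hC.1 r hC.2.1 hxx
    simp only [DLConcept.sem, Set.mem_ofPred_eq]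
    rw [card_subtype_and_eq_of_equiv e fun y => hZ.mem_sem_iff C hC.2.2 (he y)]
  | exSelf r => exact hZ.2.2.2.2.2.2.2.2.2 hC r x x' hxx
termination_by sizeOf C

theorem Bisim.exists_forth (hZ : Bisim Φ I I' Z) (R : DLRole CN RN IN) (hR : R.inL Φ)
    {x y : D} {x' : D'} (hxx : Z x x') (hxy : R.sem I x y) :
    ∃ y', Z y y' ∧ R.sem I' x' y' := by
  cases R with
  | name r => exact hZ.2.2.1 r x x' y hxx hxy
  | eps =>
    cases hxy
    exact ⟨x', hxx, rfl⟩
  | comp R S =>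
    obtain ⟨m, hxm, hmy⟩ := hxy
    obtain ⟨m', hmm, hxm'⟩ := hZ.exists_forth R hR.1 hxx hxm
    obtain ⟨y', hyy, hmy'⟩ := hZ.exists_forth S hR.2 hmm hmy
    exact ⟨y', hyy, m', hxm', hmy'⟩
  | runion R S =>
    rcases hxy with h | h
    · obtain ⟨y', hyy, hy⟩ := hZ.exists_forth R hR.1 hxx h
      exact ⟨y', hyy, Or.inl hy⟩
    · obtain ⟨y', hyy, hy⟩ := hZ.exists_forth S hR.2 hxx h
      exact ⟨y', hyy, Or.inr hy⟩
  | star R =>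
    induction hxy with
    | refl => exact ⟨x', hxx, .refl⟩
    | tail _ hmy ih =>
      obtain ⟨m', hmm, hxm'⟩ := ih
      obtain ⟨y', hyy, hmy'⟩ := hZ.exists_forth R hR hmm hmy
      exact ⟨y', hyy, hxm'.tail hmy'⟩
  | test C =>
    obtain ⟨rfl, hxC⟩ := hxy
    exact ⟨x', hxx, rfl, (hZ.mem_sem_iff C hR hxx).mp hxC⟩
  | inv r => exact (hZ.2.2.2.2.1 hR).1 r x x' y hxx hxy
  | univ =>
    obtain ⟨y', hyy⟩ := (hZ.2.2.2.2.2.2.2.2.1 hR).1 y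
    exact ⟨y', hyy, trivial⟩
termination_by sizeOf R

theorem Bisim.exists_back (hZ : Bisim Φ I I' Z) (R : DLRole CN RN IN) (hR : R.inL Φ)
    {x : D} {x' y' : D'} (hxx : Z x x') (hxy : R.sem I' x' y') :
    ∃ y, Z y y' ∧ R.sem I x y := by
  cases R with
  | name r => exact hZ.2.2.2.1 r x x' y' hxx hxy
  | eps =>
    cases hxy
    exact ⟨x, hxx, rfl⟩
  | comp R S =>
    obtain ⟨m', hxm', hmy'⟩ := hxy
    obtain ⟨m, hmm, hxm⟩ := hZ.exists_back R hR.1 hxx hxm'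
    obtain ⟨y, hyy, hmy⟩ := hZ.exists_back S hR.2 hmm hmy'
    exact ⟨y, hyy, m, hxm, hmy⟩
  | runion R S =>
    rcases hxy with h | h
    · obtain ⟨y, hyy, hy⟩ := hZ.exists_back R hR.1 hxx h
      exact ⟨y, hyy, Or.inl hy⟩
    · obtain ⟨y, hyy, hy⟩ := hZ.exists_back S hR.2 hxx h
      exact ⟨y, hyy, Or.inr hy⟩
  | star R =>
    induction hxy with
    | refl => exact ⟨x, hxx, .refl⟩
    | tail _ hmy' ih =>
      obtain ⟨m, hmm, hxm⟩ := ih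
      obtain ⟨y, hyy, hmy⟩ := hZ.exists_back R hR hmm hmy'
      exact ⟨y, hyy, hxm.tail hmy⟩
  | test C =>
    obtain ⟨rfl, hxC⟩ := hxy
    exact ⟨x, hxx, rfl, (hZ.mem_sem_iff C hR hxx).mpr hxC⟩
  | inv r => exact (hZ.2.2.2.2.1 hR).2 r x x' y' hxx hxy
  | univ =>
    obtain ⟨y, hyy⟩ := (hZ.2.2.2.2.2.2.2.2.1 hR).2 y'
    exact ⟨y, hyy, trivial⟩
termination_by sizeOf R

end

end Invariance

section Characteristic

variable {CN RN IN D : Type}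

theorem LEquiv.refl (Φ : DLFeat) (I : Interp CN RN IN D) (x : D) : LEquiv Φ I I x x :=
  fun _ _ => Iff.rfl

theorem LEquiv.symm {Φ : DLFeat} {I : Interp CN RN IN D} {x y : D} (h : LEquiv Φ I I x y) :
    LEquiv Φ I I y x :=
  fun C hC => (h C hC).symm

def lequivSetoid (Φ : DLFeat) (I : Interp CN RN IN D) : Setoid D where
  r := LEquiv Φ I I
  iseqv :=
    { refl := LEquiv.refl Φ I
      symm := LEquiv.symm
      trans := fun h h' C hC => (h C hC).trans (h' C hC) }

theorem gbisim.lequiv {Φ : DLFeat} {I : Interp CN RN IN D} {x y : D} (h : gbisim Φ I x y) :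
    LEquiv Φ I I x y := by
  obtain ⟨Z, hZ, hxy⟩ := h
  exact fun C hC => hZ.mem_sem_iff C hC hxy

def toLEquivQuotient (Φ : DLFeat) (I : Interp CN RN IN D) :
    Quot (gbisim Φ I) → Quotient (lequivSetoid Φ I) :=
  Quot.lift (Quotient.mk _) fun _ _ h => Quotient.sound (gbisim.lequiv h)

instance finite_quotient_lequivSetoid {Φ : DLFeat} {I : Interp CN RN IN D}
    [Finite (Quot (gbisim Φ I))] : Finite (Quotient (lequivSetoid Φ I)) :=
  Finite.of_surjective (toLEquivQuotient Φ I) ((Quot.surjective_lift _).mpr Quotient.mk_surjective)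

namespace DLConcept

def listConj : List (DLConcept CN RN IN) → DLConcept CN RN IN :=
  List.foldr conj top

def listDisj : List (DLConcept CN RN IN) → DLConcept CN RN IN :=
  List.foldr disj bot

theorem inL_listConj {Φ : DLFeat} {l : List (DLConcept CN RN IN)} (h : ∀ C ∈ l, C.inL Φ) :
    (listConj l).inL Φ := by
  induction l with
  | nil => trivial
  | cons C l ih => exact ⟨h C (by simp), ih fun C hC => h C (by simp [hC])⟩

theorem inL_listDisj {Φ : DLFeat} {l : List (DLConcept CN RN IN)} (h : ∀ C ∈ l, C.inL Φ) :
    (listDisj l).inL Φ := by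
  induction l with
  | nil => trivial
  | cons C l ih => exact ⟨h C (by simp), ih fun C hC => h C (by simp [hC])⟩

theorem mem_sem_listConj {I : Interp CN RN IN D} {l : List (DLConcept CN RN IN)} {u : D} :
    u ∈ (listConj l).sem I ↔ ∀ C ∈ l, u ∈ C.sem I := by
  induction l with
  | nil => simp [listConj, sem]
  | cons C l ih => simp [listConj, sem, ← ih]

theorem mem_sem_listDisj {I : Interp CN RN IN D} {l : List (DLConcept CN RN IN)} {u : D} :
    u ∈ (listDisj l).sem I ↔ ∃ C ∈ l, u ∈ C.sem I := by
  induction l with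
  | nil => simp [listDisj, sem]
  | cons C l ih => simp [listDisj, sem, ← ih]

theorem mem_qsem_listDisj {J : QSInterp CN RN IN D} {l : List (DLConcept CN RN IN)} {u : D} :
    u ∈ (listDisj l).qsem J ↔ ∃ C ∈ l, u ∈ C.qsem J := by
  induction l with
  | nil => simp [listDisj, qsem]
  | cons C l ih => simp [listDisj, qsem, ← ih]

end DLConcept

variable {Φ : DLFeat} {I : Interp CN RN IN D}

theorem LEquiv.exists_separating {u v : D} (h : ¬ LEquiv Φ I I u v) :
    ∃ C : DLConcept CN RN IN, C.inL Φ ∧ u ∈ C.sem I ∧ v ∉ C.sem I := by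
  obtain ⟨C, hC, huv⟩ : ∃ C : DLConcept CN RN IN, C.inL Φ ∧ ¬ (u ∈ C.sem I ↔ v ∈ C.sem I) := by
    simpa [LEquiv] using h
  by_cases hu : u ∈ C.sem I
  · exact ⟨C, hC, hu, by tauto⟩
  · exact ⟨.neg C, hC, hu, by simp only [DLConcept.sem]; tauto⟩

variable [Finite (Quotient (lequivSetoid Φ I))]

theorem exists_charConcept :
    ∃ χ : Quotient (lequivSetoid Φ I) → DLConcept CN RN IN, (∀ c, (χ c).inL Φ) ∧
      ∀ c u, u ∈ (χ c).sem I ↔ Quotient.mk _ u = c := by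
  classical
  have := Fintype.ofFinite (Quotient (lequivSetoid Φ I))
  have hsep : ∀ c c' : Quotient (lequivSetoid Φ I), ∃ C : DLConcept CN RN IN, C.inL Φ ∧
      c.out ∈ C.sem I ∧ (c' ≠ c → c'.out ∉ C.sem I) := by
    intro c c'
    by_cases hcc : c' = c
    · exact ⟨.top, trivial, trivial, fun h => (h hcc).elim⟩
    · have : ¬ LEquiv Φ I I c.out c'.out := fun h => hcc (Quotient.out_equiv_out.mp h).symm
      obtain ⟨C, hC, hc, hc'⟩ := LEquiv.exists_separating this
      exact ⟨C, hC, hc, fun _ => hc'⟩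
  choose S hSL hSc hSc' using hsep
  refine ⟨fun c => .listConj (Finset.univ.toList.map (S c)), fun c => ?_, fun c u => ?_⟩
  · exact DLConcept.inL_listConj (by simpa using hSL c)
  · have hu : LEquiv Φ I I (Quotient.mk (lequivSetoid Φ I) u).out u :=
      Quotient.mk_out (s := lequivSetoid Φ I) u
    simp only [DLConcept.mem_sem_listConj, List.mem_map, Finset.mem_toList, Finset.mem_univ,
      true_and, forall_exists_index, forall_apply_eq_imp_iff]
    constructor
    · intro h
      by_contra hne
      exact hSc' c _ hne ((hu _ (hSL c _)).mpr (h _))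
    · rintro rfl c'
      exact (hu _ (hSL _ c')).mp (hSc _ c')

variable (Φ I) in
noncomputable def charConcept (c : Quotient (lequivSetoid Φ I)) : DLConcept CN RN IN :=
  exists_charConcept.choose c

theorem inL_charConcept (c : Quotient (lequivSetoid Φ I)) : (charConcept Φ I c).inL Φ :=
  exists_charConcept.choose_spec.1 c

theorem mem_sem_charConcept {c : Quotient (lequivSetoid Φ I)} {u : D} :
    u ∈ (charConcept Φ I c).sem I ↔ Quotient.mk _ u = c :=
  exists_charConcept.choose_spec.2 c u

end Characteristic

def SameTBoxAxioms {CN RN IN D D' : Type} (Φ : DLFeat) (I : Interp CN RN IN D)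
    (J : QSInterp CN RN IN D') : Prop :=
  ∀ C C' : DLConcept CN RN IN, C.inL Φ → C'.inL Φ → (C.sem I ⊆ C'.sem I ↔ C.qsem J ⊆ C'.qsem J)

theorem qsum_le_sum {D : Type} [Fintype D] (f : D → ℕ) (S : Set D) :
    qsum f S ≤ ((∑ y, f y : ℕ) : ℕ∞) := by
  push_cast
  exact iSup₂_le fun s _ => Finset.sum_le_sum_of_subset (Finset.subset_univ s)

section SameTBoxAxioms

variable {CN RN IN D D' : Type} {Φ : DLFeat} {I : Interp CN RN IN D} {J : QSInterp CN RN IN D'}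

theorem SameTBoxAxioms.qsem_nonempty (hJ : SameTBoxAxioms Φ I J) {C : DLConcept CN RN IN}
    (hC : C.inL Φ) (hne : (C.sem I).Nonempty) : (C.qsem J).Nonempty := by
  by_contra hempty
  obtain ⟨u, hu⟩ := hne
  have hbot : C.sem I ⊆ DLConcept.bot.sem I :=
    (hJ C .bot hC trivial).mpr
      (by rw [Set.not_nonempty_iff_eq_empty.mp hempty]; exact Set.empty_subset _)
  exact hbot hu

variable [Finite (Quotient (lequivSetoid Φ I))]

theorem SameTBoxAxioms.card_quotient_le (hJ : SameTBoxAxioms Φ I J) :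
    Cardinal.mk (Quotient (lequivSetoid Φ I)) ≤ Cardinal.mk D' := by
  classical
  have := Fintype.ofFinite (Quotient (lequivSetoid Φ I))
  have hdisjL : ∀ s : Finset (Quotient (lequivSetoid Φ I)),
      (DLConcept.listDisj (s.toList.map (charConcept Φ I))).inL Φ := fun s =>
    DLConcept.inL_listDisj (by simpa using fun c _ => inL_charConcept c)
  have hpick : ∀ c, ∃ d : D', d ∈ (charConcept Φ I c).qsem J ∧
      ∀ c' ≠ c, d ∉ (charConcept Φ I c').qsem J := by
    intro c
    have hcover := (hJ .top _ trivial (hdisjL Finset.univ)).mp fun u _ =>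
      DLConcept.mem_sem_listDisj.mpr
        ⟨charConcept Φ I (Quotient.mk _ u), by simp, mem_sem_charConcept.mpr rfl⟩
    have hmiss : ¬ DLConcept.top.sem I ⊆
        (DLConcept.listDisj ((Finset.univ.filter (· ≠ c)).toList.map (charConcept Φ I))).sem I :=
      fun h => by
        obtain ⟨C, hC, hcC⟩ := DLConcept.mem_sem_listDisj.mp (h (Set.mem_univ c.out))
        obtain ⟨c', hc', rfl⟩ := by simpa using hC
        exact hc' (mem_sem_charConcept.mp hcC ▸ c.out_eq)
    obtain ⟨d, -, hd⟩ := Set.not_subset.mp (mt (hJ .top _ trivial (hdisjL _)).mpr hmiss)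
    have hnot : ∀ c' ≠ c, d ∉ (charConcept Φ I c').qsem J := fun c' hc' hdc' =>
      hd (DLConcept.mem_qsem_listDisj.mpr ⟨_, List.mem_map.mpr ⟨c', by simpa using hc', rfl⟩, hdc'⟩)
    obtain ⟨C, hC, hdC⟩ := DLConcept.mem_qsem_listDisj.mp (hcover (Set.mem_univ d))
    obtain ⟨c', -, rfl⟩ := List.mem_map.mp hC
    obtain rfl : c' = c := by_contra fun hc' => hnot c' hc' hdC
    exact ⟨d, hdC, hnot⟩
  choose d hd hd' using hpick
  refine Cardinal.mk_le_of_injective (f := d) fun c c' hcc => by_contra fun hne => ?_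
  exact hd' c' c hne (hcc ▸ hd c)

end SameTBoxAxioms

section LEquivBisim

variable {CN RN IN D : Type} {Φ : DLFeat} {I : Interp CN RN IN D}

theorem LEquiv.card_succ_eq (hQ : Φ.hasQ = true) {r : RN} {b : Bool}
    (hb : b = true → Φ.hasI = true) {C : DLConcept CN RN IN} (hC : C.inL Φ) {x x' : D}
    (hxx : LEquiv Φ I I x x')
    (hfin : Cardinal.mk {y // brInt I (r, b) x y ∧ y ∈ C.sem I} < Cardinal.aleph0) :
    Cardinal.mk {y // brInt I (r, b) x y ∧ y ∈ C.sem I} =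
      Cardinal.mk {y // brInt I (r, b) x' y ∧ y ∈ C.sem I} := by
  obtain ⟨m, hm⟩ := Cardinal.lt_aleph0.mp hfin
  have hge := (hxx (.atLeast m r b C) ⟨hQ, hb, hC⟩).mp hm.ge
  have hle := (hxx (.atMost m r b C) ⟨hQ, hb, hC⟩).mp hm.le
  exact hm.trans (le_antisymm hge hle)

variable [Finite (Quotient (lequivSetoid Φ I))]

theorem LEquiv.exists_forth (R : DLRole CN RN IN) (hR : R.inL Φ) {x x' y : D}
    (hxx : LEquiv Φ I I x x') (hxy : R.sem I x y) : ∃ y', LEquiv Φ I I y y' ∧ R.sem I x' y' := by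
  obtain ⟨y', hxy', hy'⟩ := (hxx (.ex R (charConcept Φ I (Quotient.mk _ y)))
    ⟨hR, inL_charConcept _⟩).mp ⟨y, hxy, mem_sem_charConcept.mpr rfl⟩
  exact ⟨y', Quotient.exact (mem_sem_charConcept.mp hy').symm, hxy'⟩

theorem SameTBoxAxioms.card_succ_lt_aleph0 {D' : Type} [Finite D'] {J : QSInterp CN RN IN D'}
    (hJ : SameTBoxAxioms Φ I J) (hQ : Φ.hasQ = true) (r : RN) {b : Bool}
    (hb : b = true → Φ.hasI = true) {C : DLConcept CN RN IN} (hC : C.inL Φ) (x : D) :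
    Cardinal.mk {y // brInt I (r, b) x y ∧ y ∈ C.sem I} < Cardinal.aleph0 := by
  have := Fintype.ofFinite D'
  by_contra hinf
  set χ := charConcept Φ I (Quotient.mk _ x)
  have hvalid : ∀ k : ℕ, χ.qsem J ⊆ (DLConcept.atLeast k r b C).qsem J := fun k =>
    (hJ χ (.atLeast k r b C) (inL_charConcept _) ⟨hQ, hb, hC⟩).mp fun u hu =>
      (Quotient.exact (mem_sem_charConcept.mp hu).symm (.atLeast k r b C) ⟨hQ, hb, hC⟩).mp
        ((Cardinal.natCast_lt_aleph0 (n := k)).le.trans (not_lt.mp hinf))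
  obtain ⟨d, hd⟩ := hJ.qsem_nonempty (inL_charConcept _) ⟨x, mem_sem_charConcept.mpr rfl⟩
  have hbig := (hvalid (∑ y, J.QU (r, b) d y + 1) hd).trans (qsum_le_sum _ _)
  exact absurd (ENat.natCast_le_natCast.mp hbig) (by omega)

variable {D' : Type} [Finite D'] {J : QSInterp CN RN IN D'}

theorem SameTBoxAxioms.exists_equiv_succ (hJ : SameTBoxAxioms Φ I J) (hQ : Φ.hasQ = true)
    (r : RN) {b : Bool} (hb : b = true → Φ.hasI = true) {x x' : D} (hxx : LEquiv Φ I I x x') :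
    ∃ e : {y // brInt I (r, b) x y} ≃ {y // brInt I (r, b) x' y},
      ∀ y, LEquiv Φ I I y.1 (e y).1 := by
  have fiber : ∀ (z : D) (c : Quotient (lequivSetoid Φ I)),
      {y : {y // brInt I (r, b) z y} // Quotient.mk _ y.1 = c} ≃
        {y // brInt I (r, b) z y ∧ y ∈ (charConcept Φ I c).sem I} := fun z c =>
    (Equiv.subtypeSubtypeEquivSubtypeInter (brInt I (r, b) z) (Quotient.mk _ · = c)).trans
      (Equiv.subtypeEquivRight fun y => and_congr_right fun _ => mem_sem_charConcept.symm)
  have hcard : ∀ c, Nonempty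
      ({y : {y // brInt I (r, b) x y} // Quotient.mk _ y.1 = c} ≃
        {y : {y // brInt I (r, b) x' y} // Quotient.mk _ y.1 = c}) := fun c =>
    Cardinal.eq.mp <| by
      rw [Cardinal.mk_congr (fiber x c), Cardinal.mk_congr (fiber x' c)]
      exact hxx.card_succ_eq hQ hb (inL_charConcept c)
        (hJ.card_succ_lt_aleph0 hQ r hb (inL_charConcept c) x)
  refine ⟨Equiv.ofFiberEquiv fun c => (hcard c).some, fun y => ?_⟩
  exact Quotient.exact (Equiv.ofFiberEquiv_map (fun c => (hcard c).some) y).symm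

theorem SameTBoxAxioms.bisim_lequiv (hJ : SameTBoxAxioms Φ I J) :
    Bisim Φ I I (LEquiv Φ I I) := by
  have back : ∀ (R : DLRole CN RN IN), R.inL Φ → ∀ {x x' y' : D}, LEquiv Φ I I x x' →
      R.sem I x' y' → ∃ y, LEquiv Φ I I y y' ∧ R.sem I x y := fun R hR x x' y' hxx hxy =>
    let ⟨y, hy, hxy⟩ := LEquiv.exists_forth R hR hxx.symm hxy
    ⟨y, hy.symm, hxy⟩
  refine ⟨fun _ => LEquiv.refl Φ I _, fun A _ _ hxx => hxx (.atom A) trivial,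
    fun r _ _ _ => LEquiv.exists_forth (.name r) trivial,
    fun r _ _ _ => back (.name r) trivial,
    fun hI => ⟨fun r _ _ _ => LEquiv.exists_forth (.inv r) hI, fun r _ _ _ => back (.inv r) hI⟩,
    fun hO a _ _ hxx => hxx (.nom a) hO,
    fun hQ r _ _ => hJ.exists_equiv_succ hQ r (b := false) nofun,
    fun hQ hI r _ _ => hJ.exists_equiv_succ hQ r (b := true) fun _ => hI,
    fun _ => ⟨fun x => ⟨x, LEquiv.refl Φ I x⟩,
      fun x => ⟨x, LEquiv.refl Φ I x⟩⟩,
    fun hS r _ _ hxx => hxx (.exSelf r) hS⟩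

theorem SameTBoxAxioms.gbisim_iff_lequiv (hJ : SameTBoxAxioms Φ I J) {x y : D} :
    gbisim Φ I x y ↔ LEquiv Φ I I x y :=
  ⟨gbisim.lequiv, fun h => ⟨_, hJ.bisim_lequiv, h⟩⟩

theorem SameTBoxAxioms.toLEquivQuotient_injective (hJ : SameTBoxAxioms Φ I J) :
    Function.Injective (toLEquivQuotient Φ I) := by
  rintro ⟨x⟩ ⟨y⟩ hxy
  exact Quot.sound (hJ.gbisim_iff_lequiv.mpr (Quotient.exact hxy))

end LEquivBisim

/-- If `I` is unreachable-objects-free and its quotient QS-interpretation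
is finite, then the quotient is a minimal QS-interpretation validating the same
terminological axioms of `L_Φ` as `I`. -/
theorem qs_quotient_minimality {CN RN IN D : Type} (Φ : DLFeat)
    (I : Interp CN RN IN D) (huof : UOF Φ I) (hfin : Finite (Quot (gbisim Φ I))) :
    ∀ (D' : Type) (J : QSInterp CN RN IN D'), J.Proper →
      (∀ C C' : DLConcept CN RN IN, C.inL Φ → C'.inL Φ →
        (DLConcept.sem I C ⊆ DLConcept.sem I C' ↔
          DLConcept.qsem J C ⊆ DLConcept.qsem J C')) →
      Cardinal.mk (Quot (gbisim Φ I)) ≤ Cardinal.mk D' := by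
  rintro D' J - (hJ : SameTBoxAxioms Φ I J)
  rcases finite_or_infinite D' with hD' | hD'
  · calc Cardinal.mk (Quot (gbisim Φ I))
        ≤ Cardinal.mk (Quotient (lequivSetoid Φ I)) :=
          Cardinal.mk_le_of_injective hJ.toLEquivQuotient_injective
      _ ≤ Cardinal.mk D' := hJ.card_quotient_le
  · exact (Cardinal.mk_lt_aleph0_iff.mpr hfin).le.trans (Cardinal.infinite_iff.mp hD')
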